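/- arXiv:1601.06732 — 3 statements merged into one kernel-verified Lean document; each statement's English description precedes it below -/
import Mathlib

section
/- Let n ≥ 1, let λ₁, …, λₙ be strictly positive real weights with total λ_T = Σᵢ λᵢ, let p ∈ {0,1}ⁿ be a prototype vector, and let ε be a random variable uniformly distributed on the interval [0, λ_T]. For any vector of individual membership values m ∈ [0,1]ⁿ (where mᵢ is the membership μ_{±Lᵢ}(Yᵢ) of the i-th coordinate in the i-th, possibly negated, label, so that the point represented in the binary space has coordinate distance 1 − mᵢ from the prototype coordinate pᵢ), the membership of the composite concept, defined as μ_α(Y) = P( Σᵢ λᵢ (1 − mᵢ) ≤ ε ), equals the weighted average Σᵢ (λᵢ / λ_T) · mᵢ. -/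
open MeasureTheory

/-- **Theorem (weighted-sum membership of a composite concept).**
Let `n ≥ 1`, let `lam i > 0` with total `lamT = ∑ i, lam i`, let `p ∈ {0,1}ⁿ` be a
prototype, and let `ε` be uniform on `[0, lamT]` (modelled by the uniform measure
`μ = (ofReal lamT)⁻¹ • volume.restrict (Icc 0 lamT)`).  For any vector of individual
memberships `m ∈ [0,1]ⁿ`, the composite membership
`μ_α(Y) = P(∑ i, lam i * (1 - m i) ≤ ε)` equals `∑ i, (lam i / lamT) * m i`. -/
theorem composite_membership_weighted_sum
    (n : ℕ) (hn : 1 ≤ n)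
    (lam : Fin n → ℝ) (hlam : ∀ i, 0 < lam i)
    (lamT : ℝ) (hlamT : lamT = ∑ i, lam i)
    (p : Fin n → ℝ) (hp : ∀ i, p i = 0 ∨ p i = 1)
    (m : Fin n → ℝ) (hm : ∀ i, m i ∈ Set.Icc (0 : ℝ) 1)
    (μ : Measure ℝ)
    (hμ : μ = (ENNReal.ofReal lamT)⁻¹ • volume.restrict (Set.Icc 0 lamT)) :
    μ {ε : ℝ | ∑ i, lam i * (1 - m i) ≤ ε} =
      ENNReal.ofReal (∑ i, (lam i / lamT) * m i) := by
  set d : ℝ := ∑ i, lam i * (1 - m i) with hd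
  have hlamTpos : 0 < lamT := by
    rw [hlamT]
    have : Nonempty (Fin n) := Fin.pos_iff_nonempty.mp hn
    exact Finset.sum_pos (fun i _ => hlam i) Finset.univ_nonempty
  have hd0 : 0 ≤ d :=
    Finset.sum_nonneg fun i _ => mul_nonneg (hlam i).le (by linarith [(hm i).2])
  have hdT : d ≤ lamT := by
    rw [hlamT]
    exact Finset.sum_le_sum fun i _ =>
      mul_le_of_le_one_right (hlam i).le (by linarith [(hm i).1])
  have hset : {ε : ℝ | d ≤ ε} ∩ Set.Icc 0 lamT = Set.Icc d lamT := by
    ext x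
    simp only [Set.mem_inter_iff, Set.mem_setOf_eq, Set.mem_Icc]
    constructor
    · rintro ⟨h1, _, h3⟩; exact ⟨h1, h3⟩
    · rintro ⟨h1, h2⟩; exact ⟨h1, le_trans hd0 h1, h2⟩
  have hsum : lamT - d = ∑ i, lam i * m i := by
    rw [hlamT, hd, ← Finset.sum_sub_distrib]
    congr 1; ext i; ring
  rw [hμ, Measure.smul_apply, show {ε : ℝ | d ≤ ε} = Set.Ici d from rfl,
    Measure.restrict_apply measurableSet_Ici, show Set.Ici d = {ε : ℝ | d ≤ ε} from rfl,
    hset, Real.volume_Icc, smul_eq_mul,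
    ← ENNReal.ofReal_inv_of_pos hlamTpos,
    ← ENNReal.ofReal_mul (by positivity)]
  congr 1
  rw [hsum, Finset.mul_sum]
  apply Finset.sum_congr rfl
  intro i _
  field_simp
end

section
/- Let θ and φ be compound concepts whose memberships are weighted sums of the same n individual label memberships: μ_θ(Y) = Σᵢ (λ_{θ,i} / λ_{θ,T}) mᵢ and μ_φ(Y) = Σᵢ (λ_{φ,i} / λ_{φ,T}) mᵢ, where λ_{θ,i}, λ_{φ,i} > 0, λ_{θ,T} = Σᵢ λ_{θ,i}, λ_{φ,T} = Σᵢ λ_{φ,i}, and mᵢ ∈ [0,1]. Combine θ and φ in the two-dimensional binary space {0,1}² with prototype (1,1), weights w₁, w₂ > 0 with w_T = w₁ + w₂, and threshold ε uniformly distributed on [0, w_T], so that the membership of the combination θ∙φ is μ_{θ∙φ}(Y) = P( w₁(1 − μ_θ(Y)) + w₂(1 − μ_φ(Y)) ≤ ε ). Then μ_{θ∙φ}(Y) = Σᵢ ( (w₁ λ_{φ,T} λ_{θ,i} + w₂ λ_{θ,T} λ_{φ,i}) / (w_T λ_{θ,T} λ_{φ,T}) ) · mᵢ. -/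
open MeasureTheory

/-- **Theorem (compound concepts combine to a weighted sum of label memberships).**
Let `θ` and `φ` be compound concepts whose memberships are the weighted sums
`μθ = ∑ i, (lamθ i / lamθT) * m i` and `μφ = ∑ i, (lamφ i / lamφT) * m i` of the same
`n` individual label memberships `m i ∈ [0,1]`, where `lamθ i, lamφ i > 0`.
Combining `θ` and `φ` in `{0,1}²` with prototype `(1,1)`, weights `w₁, w₂ > 0`,
`wT = w₁ + w₂`, and threshold `ε` uniform on `[0, wT]` (modelled by the uniform measure
`μ = (ofReal wT)⁻¹ • volume.restrict (Icc 0 wT)`), the membership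
`P(w₁(1 - μθ) + w₂(1 - μφ) ≤ ε)` equals
`∑ i, ((w₁ lamφT lamθᵢ + w₂ lamθT lamφᵢ) / (wT lamθT lamφT)) * m i`. -/
theorem compound_combination_weighted_sum
    (n : ℕ) (hn : 1 ≤ n)
    (lamθ lamφ : Fin n → ℝ) (hlamθ : ∀ i, 0 < lamθ i) (hlamφ : ∀ i, 0 < lamφ i)
    (lamθT lamφT : ℝ) (hlamθT : lamθT = ∑ i, lamθ i) (hlamφT : lamφT = ∑ i, lamφ i)
    (m : Fin n → ℝ) (hm : ∀ i, m i ∈ Set.Icc (0 : ℝ) 1)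
    (μθ μφ : ℝ)
    (hμθ : μθ = ∑ i, (lamθ i / lamθT) * m i)
    (hμφ : μφ = ∑ i, (lamφ i / lamφT) * m i)
    (w₁ w₂ : ℝ) (hw₁ : 0 < w₁) (hw₂ : 0 < w₂)
    (wT : ℝ) (hwT : wT = w₁ + w₂)
    (μ : Measure ℝ)
    (hμ : μ = (ENNReal.ofReal wT)⁻¹ • volume.restrict (Set.Icc 0 wT)) :
    μ {ε : ℝ | w₁ * (1 - μθ) + w₂ * (1 - μφ) ≤ ε} =
      ENNReal.ofReal
        (∑ i, ((w₁ * lamφT * lamθ i + w₂ * lamθT * lamφ i) / (wT * lamθT * lamφT)) * m i) := by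
  have hne : (Finset.univ : Finset (Fin n)).Nonempty := by
    simpa [Finset.univ_nonempty_iff, Fin.pos_iff_nonempty] using Nat.lt_of_lt_of_le Nat.zero_lt_one hn
  have hθT : 0 < lamθT := hlamθT ▸ Finset.sum_pos (fun i _ => hlamθ i) hne
  have hφT : 0 < lamφT := hlamφT ▸ Finset.sum_pos (fun i _ => hlamφ i) hne
  have hwT0 : 0 < wT := by rw [hwT]; linarith
  have hμθ0 : 0 ≤ μθ := by
    rw [hμθ]; apply Finset.sum_nonneg
    intro i _
    exact mul_nonneg (div_nonneg (hlamθ i).le hθT.le) (hm i).1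
  have hμφ0 : 0 ≤ μφ := by
    rw [hμφ]; apply Finset.sum_nonneg
    intro i _
    exact mul_nonneg (div_nonneg (hlamφ i).le hφT.le) (hm i).1
  have hμθ1 : μθ ≤ 1 := by
    rw [hμθ]
    calc ∑ i, (lamθ i / lamθT) * m i ≤ ∑ i, (lamθ i / lamθT) * 1 := by
          apply Finset.sum_le_sum
          intro i _
          exact mul_le_mul_of_nonneg_left (hm i).2 (div_nonneg (hlamθ i).le hθT.le)
      _ = 1 := by
          simp only [mul_one]
          rw [← Finset.sum_div, ← hlamθT, div_self hθT.ne']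
  have hμφ1 : μφ ≤ 1 := by
    rw [hμφ]
    calc ∑ i, (lamφ i / lamφT) * m i ≤ ∑ i, (lamφ i / lamφT) * 1 := by
          apply Finset.sum_le_sum
          intro i _
          exact mul_le_mul_of_nonneg_left (hm i).2 (div_nonneg (hlamφ i).le hφT.le)
      _ = 1 := by
          simp only [mul_one]
          rw [← Finset.sum_div, ← hlamφT, div_self hφT.ne']
  set c := w₁ * (1 - μθ) + w₂ * (1 - μφ) with hc
  have hc0 : 0 ≤ c := by
    apply add_nonneg <;> apply mul_nonneg <;> linarith
  have hcw : c ≤ wT := by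
    rw [hwT, hc]; nlinarith
  have hset : Set.Ici c ∩ Set.Icc 0 wT = Set.Icc c wT := by
    ext x
    simp only [Set.mem_inter_iff, Set.mem_Ici, Set.mem_Icc]
    constructor
    · rintro ⟨h1, _, h3⟩; exact ⟨h1, h3⟩
    · rintro ⟨h1, h2⟩; exact ⟨h1, le_trans hc0 h1, h2⟩
  rw [hμ]
  simp only [Measure.smul_apply, smul_eq_mul]
  rw [show {ε : ℝ | c ≤ ε} = Set.Ici c from rfl,
    Measure.restrict_apply measurableSet_Ici, hset, Real.volume_Icc]
  have key : (ENNReal.ofReal wT)⁻¹ * ENNReal.ofReal (wT - c) = ENNReal.ofReal ((wT - c) / wT) := by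
    rw [ENNReal.ofReal_div_of_pos hwT0, div_eq_mul_inv, mul_comm]
  rw [key]
  congr 1
  have expand : ∑ i, ((w₁ * lamφT * lamθ i + w₂ * lamθT * lamφ i) / (wT * lamθT * lamφT)) * m i
      = (w₁ * lamφT * (∑ i, lamθ i * m i) + w₂ * lamθT * (∑ i, lamφ i * m i)) / (wT * lamθT * lamφT) := by
    rw [Finset.mul_sum, Finset.mul_sum, ← Finset.sum_add_distrib, Finset.sum_div]
    apply Finset.sum_congr rfl; intro i _; ring
  have hμθ' : μθ = (∑ i, lamθ i * m i) / lamθT := by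
    rw [hμθ, Finset.sum_div]
    apply Finset.sum_congr rfl; intro i _; ring
  have hμφ' : μφ = (∑ i, lamφ i * m i) / lamφT := by
    rw [hμφ, Finset.sum_div]
    apply Finset.sum_congr rfl; intro i _; ring
  have hw12 : w₁ + w₂ ≠ 0 := by linarith
  rw [expand, hc, hμθ', hμφ', hwT]
  field_simp
  ring
end

section
/- Let w₁, w₂ > 0 with w_T = w₁ + w₂, let ε be uniformly distributed on [0, w_T], and let a, b ∈ [0,1] be the memberships μ_θ(Y) and μ_φ(Y) of a point Y in two concepts θ and φ. Then the membership of the combination θ∙φ with prototype (1,1) in the binary space {0,1}², defined as μ_{θ∙φ}(Y) = P( w₁(1 − a) + w₂(1 − b) ≤ ε ), equals (w₁ / w_T)·a + (w₂ / w_T)·b. -/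
open MeasureTheory

/-- **Theorem (combination of two concepts in the binary square).**
Let `w₁, w₂ > 0` with `wT = w₁ + w₂`, let `ε` be uniform on `[0, wT]` (modelled by the
uniform measure `μ = (ofReal wT)⁻¹ • volume.restrict (Icc 0 wT)`), and let
`a, b ∈ [0,1]` be the memberships of a point `Y` in the concepts `θ` and `φ`.
Then the membership of the combination `θ∙φ` with prototype `(1,1)` in `{0,1}²`,
namely `P(w₁(1 - a) + w₂(1 - b) ≤ ε)`, equals `(w₁/wT)·a + (w₂/wT)·b`. -/
theorem combination_membership_weighted_sum
    (w₁ w₂ : ℝ) (hw₁ : 0 < w₁) (hw₂ : 0 < w₂)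
    (wT : ℝ) (hwT : wT = w₁ + w₂)
    (a b : ℝ) (ha : a ∈ Set.Icc (0 : ℝ) 1) (hb : b ∈ Set.Icc (0 : ℝ) 1)
    (μ : Measure ℝ)
    (hμ : μ = (ENNReal.ofReal wT)⁻¹ • volume.restrict (Set.Icc 0 wT)) :
    μ {ε : ℝ | w₁ * (1 - a) + w₂ * (1 - b) ≤ ε} =
      ENNReal.ofReal ((w₁ / wT) * a + (w₂ / wT) * b) := by
  obtain ⟨ha0, ha1⟩ := ha
  obtain ⟨hb0, hb1⟩ := hb
  set d := w₁ * (1 - a) + w₂ * (1 - b) with hd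
  have hwTpos : 0 < wT := by rw [hwT]; linarith
  have hd0 : 0 ≤ d := by have := hw₁.le; have := hw₂.le; nlinarith
  have hdT : d ≤ wT := by rw [hwT]; nlinarith
  have hset : {ε : ℝ | d ≤ ε} = Set.Ici d := rfl
  rw [hμ, Measure.smul_apply, smul_eq_mul, hset,
    Measure.restrict_apply measurableSet_Ici]
  have hinter : Set.Ici d ∩ Set.Icc 0 wT = Set.Icc d wT := by
    ext x
    simp only [Set.mem_inter_iff, Set.mem_Ici, Set.mem_Icc]
    constructor
    · rintro ⟨h1, h2, h3⟩; exact ⟨h1, h3⟩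
    · rintro ⟨h1, h2⟩; exact ⟨h1, le_trans hd0 h1, h2⟩
  rw [hinter, Real.volume_Icc]
  rw [← ENNReal.ofReal_inv_of_pos hwTpos,
    ← ENNReal.ofReal_mul (by positivity)]
  congr 1
  field_simp
  rw [hwT]; ring
end
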